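/- Every cubic graph G satisfies ν₂(G) ≤ (|V(G)| + 2·ν₃(G))/4, equivalently ν₃(G) ≥ 2·ν₂(G) − |V(G)|/2. -/

import Mathlib

structure Multigraph where
  V : Type
  E : Type
  fintypeV : Fintype V
  decEqV : DecidableEq V
  fintypeE : Fintype E
  decEqE : DecidableEq E
  ends : E → Sym2 V

attribute [instance] Multigraph.fintypeV Multigraph.decEqV Multigraph.fintypeE Multigraph.decEqE

namespace Multigraph

/-- `e` is a loop if both of its endpoints coincide. -/
def IsLoop (G : Multigraph) (e : G.E) : Prop := (G.ends e).IsDiag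

/-- A loopless multigraph. -/
def Loopless (G : Multigraph) : Prop := ∀ e, ¬ G.IsLoop e

/-- Degree of a vertex: loops count twice. -/
def deg (G : Multigraph) (v : G.V) : ℕ :=
  ∑ e : G.E, (if G.ends e = Sym2.diag v then 2 else if v ∈ G.ends e then 1 else 0)

/-- Adjacency via some edge. -/
def Adj (G : Multigraph) (u v : G.V) : Prop := ∃ e, G.ends e = s(u, v)

/-- Connectivity. -/
def Connected (G : Multigraph) : Prop := ∀ u v : G.V, Relation.ReflTransGen G.Adj u v

/-- A matching: a set of non-loop edges no two of which share an endpoint. -/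
def IsMatching (G : Multigraph) (M : Finset G.E) : Prop :=
  (∀ e ∈ M, ¬ G.IsLoop e) ∧
  ∀ e ∈ M, ∀ f ∈ M, e ≠ f → ∀ v : G.V, v ∈ G.ends e → v ∉ G.ends f

/-- A maximum matching. -/
def IsMaximumMatching (G : Multigraph) (M : Finset G.E) : Prop :=
  G.IsMatching M ∧ ∀ M' : Finset G.E, G.IsMatching M' → M'.card ≤ M.card

/-- `v` is saturated by `M`. -/
def Saturated (G : Multigraph) (M : Finset G.E) (v : G.V) : Prop :=
  ∃ e ∈ M, v ∈ G.ends e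

/-- Size of a maximum matching. -/
noncomputable def nu1 (G : Multigraph) : ℕ :=
  sSup {m | ∃ M : Finset G.E, G.IsMatching M ∧ M.card = m}

/-- Max number of edges coverable by two disjoint matchings. -/
noncomputable def nu2 (G : Multigraph) : ℕ :=
  sSup {m | ∃ H H' : Finset G.E, G.IsMatching H ∧ G.IsMatching H' ∧
    Disjoint H H' ∧ H.card + H'.card = m}

/-- Max number of edges coverable by three pairwise disjoint matchings. -/
noncomputable def nu3 (G : Multigraph) : ℕ :=
  sSup {m | ∃ H₁ H₂ H₃ : Finset G.E, G.IsMatching H₁ ∧ G.IsMatching H₂ ∧ G.IsMatching H₃ ∧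
    Disjoint H₁ H₂ ∧ Disjoint H₁ H₃ ∧ Disjoint H₂ H₃ ∧ H₁.card + H₂.card + H₃.card = m}

/-- Subdividing the edge `e`, with endpoints `u`, `v`, once: replace it by a path `u - w - v`
through a new vertex `w`. -/
def subdivideOnce (G : Multigraph) (e : G.E) (u v : G.V) : Multigraph where
  V := G.V ⊕ Unit
  E := {f : G.E // f ≠ e} ⊕ Bool
  fintypeV := inferInstance
  decEqV := inferInstance
  fintypeE := inferInstance
  decEqE := inferInstance
  ends := fun f =>
    match f with
    | Sum.inl ⟨f, _⟩ => (G.ends f).map Sum.inl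
    | Sum.inr true => s(Sum.inl u, Sum.inr ())
    | Sum.inr false => s(Sum.inl v, Sum.inr ())

/-- Subdividing every edge `e` exactly `k e` times, where `fst`/`snd` pick out the endpoints
of every edge. The edge `e` is replaced by the path
`fst e, (e,0), (e,1), …, (e, k e - 1), snd e` of length `k e + 1`. -/
def subdivide (G : Multigraph) (fst snd : G.E → G.V) (k : G.E → ℕ) : Multigraph where
  V := G.V ⊕ (Σ e : G.E, Fin (k e))
  E := Σ e : G.E, Fin (k e + 1)
  fintypeV := inferInstance
  decEqV := inferInstance
  fintypeE := inferInstance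
  decEqE := inferInstance
  ends := fun f =>
    s( if h : f.2.val = 0 then Sum.inl (fst f.1)
       else Sum.inr ⟨f.1, ⟨f.2.val - 1, by omega⟩⟩,
       if h : f.2.val = k f.1 then Sum.inl (snd f.1)
       else Sum.inr ⟨f.1, ⟨f.2.val, by have := f.2.isLt; omega⟩⟩ )


/-!
Take disjoint matchings `H₁, H₂` realising `ν₂`, let `R` be the remaining edges and `H₃` a
maximum matching of `(V, R)`, so that `ν₃ ≥ ν₂ + |H₃|`. A vertex has `R`-degree
`3 - [v ∈ V(H₁)] - [v ∈ V(H₂)]`, so with `D = V(H₁) ∩ V(H₂)` (the vertices of `R`-degree one) and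
`N` the vertices missed by both matchings (`R`-degree three), counting covered vertices reduces the
claim to `|D| ≤ 2|H₃| + |N|`.

Charge each `v ∈ D` to an edge `m ∈ H₃`: the one covering `v`, or, if `H₃` misses `v`, one covering
the other end `x` of the unique `R`-edge at `v` (`x` is covered, by maximality). Besides its own
ends, `m` is charged only with exposed vertices hanging off one and the same end `x` (two different
ends would give an augmenting path of length three); these are at most `deg_R x - 1 ≤ 2` many, they
force `x ∉ D`, and if there are two of them then `x ∈ N`. So `m` is charged at most
`2 + |N ∩ m|` times.
-/

open Finset

variable {G : Multigraph}

instance (H : Finset G.E) : DecidablePred (G.Saturated H) :=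
  fun v => inferInstanceAs (Decidable (∃ e ∈ H, v ∈ G.ends e))

def edgesAt (G : Multigraph) (R : Finset G.E) (v : G.V) : Finset G.E :=
  R.filter (fun e => v ∈ G.ends e)

def degIn (G : Multigraph) (R : Finset G.E) (v : G.V) : ℕ := (G.edgesAt R v).card

def verts (G : Multigraph) (H : Finset G.E) : Finset G.V := univ.filter (G.Saturated H)

def AdjIn (G : Multigraph) (R : Finset G.E) (v x : G.V) : Prop := ∃ f ∈ R, G.ends f = s(v, x)

structure IsMaximumMatchingIn (G : Multigraph) (R H : Finset G.E) : Prop where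
  subset : H ⊆ R
  isMatching : G.IsMatching H
  card_le : ∀ M ⊆ R, G.IsMatching M → M.card ≤ H.card

section Basic

variable {R H M : Finset G.E} {e : G.E} {v x : G.V}

lemma mem_edgesAt : e ∈ G.edgesAt R v ↔ e ∈ R ∧ v ∈ G.ends e := mem_filter

lemma mem_verts : v ∈ G.verts H ↔ G.Saturated H v := by simp [verts]

lemma exists_ends_eq_of_not_isLoop (he : ¬ G.IsLoop e) : ∃ a b, a ≠ b ∧ G.ends e = s(a, b) := by
  induction h : G.ends e using Sym2.inductionOn with
  | _ a b => exact ⟨a, b, fun hab => he (by rw [IsLoop, h, Sym2.mk_isDiag_iff]; exact hab), rfl⟩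

lemma degIn_univ (hl : G.Loopless) (v : G.V) : G.degIn univ v = G.deg v := by
  have hnotdiag : ∀ e, G.ends e ≠ Sym2.diag v := fun e h =>
    hl e (by rw [IsLoop, h]; exact Sym2.diag_isDiag v)
  simp only [deg, degIn, edgesAt, card_filter, hnotdiag, if_false]

lemma degIn_union (h : Disjoint R M) (v : G.V) : G.degIn (R ∪ M) v = G.degIn R v + G.degIn M v := by
  rw [degIn, edgesAt, filter_union, card_union_of_disjoint (disjoint_filter_filter h)]; rfl

lemma degIn_compl_add (R : Finset G.E) (v : G.V) : G.degIn Rᶜ v + G.degIn R v = G.degIn univ v := by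
  rw [← degIn_union disjoint_compl_left, union_comm, union_compl]

lemma eq_of_adjIn_of_degIn_eq_one {x' : G.V} (hv : G.degIn R v = 1) (hx : G.AdjIn R v x)
    (hx' : G.AdjIn R v x') : x = x' := by
  obtain ⟨f, hf, hfe⟩ := hx
  obtain ⟨f', hf', hfe'⟩ := hx'
  have hff' : f = f' := card_le_one.mp hv.le f (mem_edgesAt.mpr ⟨hf, hfe ▸ Sym2.mem_mk_left v x⟩)
    f' (mem_edgesAt.mpr ⟨hf', hfe' ▸ Sym2.mem_mk_left v x'⟩)
  exact Sym2.congr_right.mp (hfe.symm.trans (hff' ▸ hfe'))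

end Basic

lemma isMatching_empty : G.IsMatching ∅ := ⟨by simp, by simp⟩

lemma exists_isMaximumMatchingIn (R : Finset G.E) : ∃ H, G.IsMaximumMatchingIn R H := by
  classical
  obtain ⟨H, hH, hmax⟩ := exists_max_image (R.powerset.filter G.IsMatching) card
    ⟨∅, mem_filter.mpr ⟨empty_mem_powerset R, isMatching_empty⟩⟩
  obtain ⟨hHR, hHm⟩ := mem_filter.mp hH
  exact ⟨H, mem_powerset.mp hHR, hHm,
    fun M hMR hM => hmax M (mem_filter.mpr ⟨mem_powerset.mpr hMR, hM⟩)⟩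

lemma exists_nu2_eq (G : Multigraph) : ∃ H₁ H₂ : Finset G.E, G.IsMatching H₁ ∧ G.IsMatching H₂ ∧
    Disjoint H₁ H₂ ∧ H₁.card + H₂.card = G.nu2 := by
  refine (Nat.sSup_mem ⟨0, ∅, ∅, isMatching_empty, isMatching_empty, disjoint_empty_left _, rfl⟩
    ⟨2 * Fintype.card G.E, ?_⟩ : G.nu2 ∈ _)
  rintro _ ⟨H₁, H₂, -, -, -, rfl⟩
  have := card_le_univ H₁
  have := card_le_univ H₂
  omega

lemma card_add_card_add_card_le_nu3 {H₁ H₂ H₃ : Finset G.E} (h₁ : G.IsMatching H₁)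
    (h₂ : G.IsMatching H₂) (h₃ : G.IsMatching H₃) (d₁₂ : Disjoint H₁ H₂) (d₁₃ : Disjoint H₁ H₃)
    (d₂₃ : Disjoint H₂ H₃) : H₁.card + H₂.card + H₃.card ≤ G.nu3 := by
  refine le_csSup ⟨3 * Fintype.card G.E, ?_⟩ ⟨H₁, H₂, H₃, h₁, h₂, h₃, d₁₂, d₁₃, d₂₃, rfl⟩
  rintro _ ⟨H₁, H₂, H₃, -, -, -, -, -, -, rfl⟩
  have := card_le_univ H₁
  have := card_le_univ H₂
  have := card_le_univ H₃
  omega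

namespace IsMatching

variable {H M : Finset G.E} {e f : G.E} {v : G.V}

lemma eq_of_mem_ends (hH : G.IsMatching H) (he : e ∈ H) (hf : f ∈ H) (hve : v ∈ G.ends e)
    (hvf : v ∈ G.ends f) : e = f := by
  by_contra h
  exact hH.2 e he f hf h v hve hvf

lemma subset (hH : G.IsMatching H) (hM : M ⊆ H) : G.IsMatching M :=
  ⟨fun e he => hH.1 e (hM he), fun e he f hf => hH.2 e (hM he) f (hM hf)⟩

lemma insert (hH : G.IsMatching H) (hf : ¬ G.IsLoop f)
    (hfree : ∀ v ∈ G.ends f, ¬ G.Saturated H v) : G.IsMatching (insert f H) := by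
  refine ⟨fun e he => ?_, fun e he e' he' hne v hve hve' => ?_⟩
  · rcases mem_insert.mp he with rfl | he
    exacts [hf, hH.1 e he]
  rcases mem_insert.mp he with rfl | heH <;> rcases mem_insert.mp he' with rfl | heH'
  · exact hne rfl
  · exact hfree v hve ⟨e', heH', hve'⟩
  · exact hfree v hve' ⟨e, heH, hve⟩
  · exact hH.2 e heH e' heH' hne v hve hve'

lemma degIn_eq (hH : G.IsMatching H) (v : G.V) :
    G.degIn H v = if G.Saturated H v then 1 else 0 := by
  split_ifs with hv
  · obtain ⟨e, he, hve⟩ := hv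
    refine card_eq_one.mpr ⟨e, eq_singleton_iff_unique_mem.mpr ⟨mem_edgesAt.mpr ⟨he, hve⟩, ?_⟩⟩
    intro f hfv
    obtain ⟨hf, hvf⟩ := mem_edgesAt.mp hfv
    exact hH.eq_of_mem_ends hf he hvf hve
  · exact card_eq_zero.mpr (filter_eq_empty_iff.mpr fun e he hve => hv ⟨e, he, hve⟩)

lemma card_verts (hH : G.IsMatching H) : (G.verts H).card = 2 * H.card := by
  have hverts : G.verts H = H.biUnion (fun e => univ.filter (· ∈ G.ends e)) := by
    ext v; simp [mem_verts, Saturated]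
  rw [hverts, card_biUnion, sum_const_nat, mul_comm]
  · intro e he
    obtain ⟨a, b, hab, hends⟩ := exists_ends_eq_of_not_isLoop (hH.1 e he)
    have : univ.filter (· ∈ G.ends e) = {a, b} := by ext v; simp [hends]
    rw [this, card_pair hab]
  · intro e he f hf hef
    exact disjoint_filter.mpr fun v _ hve hvf => hH.2 e he f hf hef v hve hvf

lemma sum_card_filter_mem_ends_le (hH : G.IsMatching H) (s : Finset G.V) :
    ∑ e ∈ H, (s.filter (· ∈ G.ends e)).card ≤ s.card := by
  rw [← card_biUnion fun e he f hf hef =>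
    disjoint_filter.mpr fun v _ hve hvf => hH.2 e he f hf hef v hve hvf]
  exact card_le_card (biUnion_subset.mpr fun _ _ => filter_subset _ _)

end IsMatching

lemma notMem_of_forall_not_saturated {H : Finset G.E} {f : G.E}
    (hfree : ∀ v ∈ G.ends f, ¬ G.Saturated H v) : f ∉ H := by
  intro hf
  induction h : G.ends f using Sym2.inductionOn with
  | _ a b => exact hfree a (h ▸ Sym2.mem_mk_left a b) ⟨f, hf, h ▸ Sym2.mem_mk_left a b⟩

namespace IsMaximumMatchingIn

variable {R H : Finset G.E} {v x : G.V}

lemma saturated_of_adjIn (hl : G.Loopless) (hH : G.IsMaximumMatchingIn R H)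
    (hvx : G.AdjIn R v x) (hv : ¬ G.Saturated H v) : G.Saturated H x := by
  by_contra hx
  obtain ⟨f, hfR, hf⟩ := hvx
  have hfree : ∀ w ∈ G.ends f, ¬ G.Saturated H w := by
    intro w hw
    rw [hf, Sym2.mem_iff] at hw
    rcases hw with rfl | rfl
    exacts [hv, hx]
  have hle := hH.card_le _ (insert_subset hfR hH.subset) (hH.isMatching.insert (hl f) hfree)
  rw [card_insert_of_notMem (notMem_of_forall_not_saturated hfree)] at hle
  omega

/-- There is no augmenting path `v - a - b - v'` of length three. -/
lemma eq_of_adjIn_of_adjIn (hl : G.Loopless) (hH : G.IsMaximumMatchingIn R H) {m : G.E}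
    (hm : m ∈ H) {a b v' : G.V} (hmab : G.ends m = s(a, b)) (hva : G.AdjIn R v a)
    (hv'b : G.AdjIn R v' b) (hv : ¬ G.Saturated H v) (hv' : ¬ G.Saturated H v') : v = v' := by
  by_contra hvv'
  obtain ⟨f, hfR, hf⟩ := hva
  obtain ⟨g, hgR, hg⟩ := hv'b
  have hmatch := hH.isMatching
  have hab : a ≠ b := fun h => hl m (by rw [IsLoop, hmab, Sym2.mk_isDiag_iff]; exact h)
  have ha : a ∈ G.ends m := hmab ▸ Sym2.mem_mk_left a b
  have hb : b ∈ G.ends m := hmab ▸ Sym2.mem_mk_right a b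
  have hsat : ∀ w, G.Saturated (H.erase m) w → G.Saturated H w ∧ w ∉ G.ends m := by
    rintro w ⟨e, he, hwe⟩
    obtain ⟨hem, heH⟩ := mem_erase.mp he
    exact ⟨⟨e, heH, hwe⟩, fun hwm => hem (hmatch.eq_of_mem_ends heH hm hwe hwm)⟩
  have hgfree : ∀ w ∈ G.ends g, ¬ G.Saturated (H.erase m) w := by
    intro w hw hsw
    rw [hg, Sym2.mem_iff] at hw
    rcases hw with rfl | rfl
    · exact hv' (hsat w hsw).1
    · exact (hsat w hsw).2 hb
  have hffree : ∀ w ∈ G.ends f, ¬ G.Saturated (insert g (H.erase m)) w := by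
    rintro w hw ⟨e, he, hwe⟩
    rw [hf, Sym2.mem_iff] at hw
    rcases mem_insert.mp he with rfl | he
    · rw [hg, Sym2.mem_iff] at hwe
      rcases hw with rfl | rfl <;> rcases hwe with h | h
      · exact hvv' h
      · exact hv (h ▸ ⟨m, hm, hb⟩)
      · exact hv' (h ▸ ⟨m, hm, ha⟩)
      · exact hab h
    · rcases hw with rfl | rfl
      · exact hv (hsat w ⟨e, he, hwe⟩).1
      · exact (hsat w ⟨e, he, hwe⟩).2 ha
  have hle := hH.card_le _
    (insert_subset hfR (insert_subset hgR ((erase_subset m H).trans hH.subset)))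
    (((hmatch.subset (erase_subset m H)).insert (hl g) hgfree).insert (hl f) hffree)
  rw [card_insert_of_notMem (notMem_of_forall_not_saturated hffree),
    card_insert_of_notMem (notMem_of_forall_not_saturated hgfree), card_erase_of_mem hm] at hle
  have := card_pos.mpr ⟨m, hm⟩
  omega

end IsMaximumMatchingIn

def vertsOfDegIn (G : Multigraph) (R : Finset G.E) (k : ℕ) : Finset G.V :=
  univ.filter (fun v => G.degIn R v = k)

open Classical in
noncomputable def attachedTo (G : Multigraph) (R H : Finset G.E) (m : G.E) : Finset G.V :=
  (G.vertsOfDegIn R 1).filter (fun v => ¬ G.Saturated H v ∧ ∃ x ∈ G.ends m, G.AdjIn R v x)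

noncomputable def chargedTo (G : Multigraph) (R H : Finset G.E) (m : G.E) : Finset G.V :=
  (G.vertsOfDegIn R 1).filter (· ∈ G.ends m) ∪ G.attachedTo R H m

section Charging

variable {R H : Finset G.E} {m : G.E} {v : G.V}

lemma mem_vertsOfDegIn {k : ℕ} : v ∈ G.vertsOfDegIn R k ↔ G.degIn R v = k := by
  simp [vertsOfDegIn]

lemma mem_attachedTo : v ∈ G.attachedTo R H m ↔
    G.degIn R v = 1 ∧ ¬ G.Saturated H v ∧ ∃ x ∈ G.ends m, G.AdjIn R v x := by
  simp [attachedTo, mem_vertsOfDegIn]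

lemma card_add_one_le_degIn {T : Finset G.V} {x : G.V} (hm : m ∈ G.edgesAt R x)
    (hT : ∀ v ∈ T, G.AdjIn R v x ∧ v ∉ G.ends m) : T.card + 1 ≤ G.degIn R x := by
  have hle : T.card ≤ ((G.edgesAt R x).erase m).card := by
    refine card_le_card_of_forall_subsingleton (fun v e => G.ends e = s(v, x))
      (fun v hv => ?_) (fun e _ => ?_)
    · obtain ⟨⟨f, hfR, hf⟩, hvm⟩ := hT v hv
      refine ⟨f, mem_erase.mpr ⟨fun hfm => hvm ?_, mem_edgesAt.mpr ⟨hfR, ?_⟩⟩, hf⟩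
      · rw [← hfm, hf]; exact Sym2.mem_mk_left v x
      · rw [hf]; exact Sym2.mem_mk_right v x
    · rintro v ⟨-, hv⟩ v' ⟨-, hv'⟩
      exact Sym2.congr_left.mp (hv.symm.trans hv')
  rw [card_erase_of_mem hm] at hle
  have := card_pos.mpr ⟨m, hm⟩
  unfold degIn
  omega

lemma eq_of_mem_attachedTo (hl : G.Loopless) (hH : G.IsMaximumMatchingIn R H) (hm : m ∈ H)
    {v' x x' : G.V} (hv : v ∈ G.attachedTo R H m) (hv' : v' ∈ G.attachedTo R H m)
    (hx : x ∈ G.ends m) (hx' : x' ∈ G.ends m) (hvx : G.AdjIn R v x) (hv'x' : G.AdjIn R v' x') :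
    x = x' := by
  by_contra hxx'
  obtain ⟨hv1, hvs, -⟩ := mem_attachedTo.mp hv
  obtain ⟨-, hv's, -⟩ := mem_attachedTo.mp hv'
  obtain rfl : v = v' := hH.eq_of_adjIn_of_adjIn hl hm ((Sym2.mem_and_mem_iff hxx').mp ⟨hx, hx'⟩)
    hvx hv'x' hvs hv's
  exact hxx' (eq_of_adjIn_of_degIn_eq_one hv1 hvx hv'x')

lemma card_chargedTo_le (hl : G.Loopless) (hH : G.IsMaximumMatchingIn R H)
    (hdeg : ∀ v, G.degIn R v ≤ 3) (hm : m ∈ H) :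
    (G.chargedTo R H m).card ≤ 2 + ((G.vertsOfDegIn R 3).filter (· ∈ G.ends m)).card := by
  rw [chargedTo]
  set S := (G.vertsOfDegIn R 1).filter (· ∈ G.ends m)
  obtain ⟨a, b, hab, hmab⟩ := exists_ends_eq_of_not_isLoop (hl m)
  have hS : S ⊆ {a, b} := fun v hv => by simpa [hmab] using (mem_filter.mp hv).2
  rcases (G.attachedTo R H m).eq_empty_or_nonempty with hT | ⟨v₀, hv₀⟩
  · rw [hT, union_empty]
    have := card_le_card hS
    rw [card_pair hab] at this
    omega
  obtain ⟨-, -, x₀, hx₀m, hv₀x₀⟩ := mem_attachedTo.mp hv₀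
  have hT : ∀ v ∈ G.attachedTo R H m, G.AdjIn R v x₀ ∧ v ∉ G.ends m := by
    intro v hv
    obtain ⟨-, hvs, x, hxm, hvx⟩ := mem_attachedTo.mp hv
    exact ⟨eq_of_mem_attachedTo hl hH hm hv hv₀ hxm hx₀m hvx hv₀x₀ ▸ hvx,
      fun hvm => hvs ⟨m, hm, hvm⟩⟩
  have hcard := card_add_one_le_degIn (mem_edgesAt.mpr ⟨hH.subset hm, hx₀m⟩) hT
  have hT₀ := card_pos.mpr ⟨v₀, hv₀⟩
  have hS₁ : S.card + 1 ≤ 2 := by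
    have hx₀S : x₀ ∉ S := fun hx => by
      have := mem_vertsOfDegIn.mp (mem_filter.mp hx).1
      omega
    have := card_le_card (insert_subset (by simpa [hmab] using hx₀m) hS)
    rwa [card_insert_of_notMem hx₀S, card_pair hab] at this
  have hunion := card_union_le S (G.attachedTo R H m)
  rcases (hdeg x₀).lt_or_eq with hlt | heq
  · omega
  · have : 0 < ((G.vertsOfDegIn R 3).filter (· ∈ G.ends m)).card :=
      card_pos.mpr ⟨x₀, mem_filter.mpr ⟨mem_vertsOfDegIn.mpr heq, hx₀m⟩⟩
    omega

lemma vertsOfDegIn_one_subset_biUnion_chargedTo (hl : G.Loopless)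
    (hH : G.IsMaximumMatchingIn R H) : G.vertsOfDegIn R 1 ⊆ H.biUnion (G.chargedTo R H) := by
  intro v hv
  have hv1 := mem_vertsOfDegIn.mp hv
  rw [mem_biUnion]
  by_cases hsat : G.Saturated H v
  · obtain ⟨m, hm, hvm⟩ := hsat
    exact ⟨m, hm, mem_union_left _ (mem_filter.mpr ⟨hv, hvm⟩)⟩
  · obtain ⟨f, hf⟩ := card_eq_one.mp hv1
    obtain ⟨hfR, hvf⟩ := mem_edgesAt.mp (hf ▸ mem_singleton_self f)
    have hvx : G.AdjIn R v (Sym2.Mem.other hvf) := ⟨f, hfR, (Sym2.other_spec hvf).symm⟩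
    obtain ⟨m, hm, hxm⟩ := hH.saturated_of_adjIn hl hvx hsat
    exact ⟨m, hm, mem_union_right _ (mem_attachedTo.mpr ⟨hv1, hsat, _, hxm, hvx⟩)⟩

theorem card_vertsOfDegIn_one_le (hl : G.Loopless) (hH : G.IsMaximumMatchingIn R H)
    (hdeg : ∀ v, G.degIn R v ≤ 3) :
    (G.vertsOfDegIn R 1).card ≤ 2 * H.card + (G.vertsOfDegIn R 3).card :=
  calc (G.vertsOfDegIn R 1).card
      ≤ ∑ m ∈ H, (G.chargedTo R H m).card :=
        (card_le_card (vertsOfDegIn_one_subset_biUnion_chargedTo hl hH)).trans card_biUnion_le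
    _ ≤ ∑ m ∈ H, (2 + ((G.vertsOfDegIn R 3).filter (· ∈ G.ends m)).card) :=
        sum_le_sum fun m hm => card_chargedTo_le hl hH hdeg hm
    _ = 2 * H.card + ∑ m ∈ H, ((G.vertsOfDegIn R 3).filter (· ∈ G.ends m)).card := by
        rw [sum_add_distrib, sum_const, smul_eq_mul, mul_comm]
    _ ≤ 2 * H.card + (G.vertsOfDegIn R 3).card :=
        Nat.add_le_add_left (hH.isMatching.sum_card_filter_mem_ends_le _) _

end Charging

section TwoMatchings

variable {H₁ H₂ : Finset G.E}

lemma degIn_compl_union_add (hl : G.Loopless) (h₁ : G.IsMatching H₁) (h₂ : G.IsMatching H₂)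
    (d₁₂ : Disjoint H₁ H₂) (v : G.V) :
    G.degIn (H₁ ∪ H₂)ᶜ v + (if G.Saturated H₁ v then 1 else 0) +
      (if G.Saturated H₂ v then 1 else 0) = G.deg v := by
  rw [← degIn_univ hl, ← degIn_compl_add (H₁ ∪ H₂), degIn_union d₁₂, h₁.degIn_eq, h₂.degIn_eq,
    add_assoc]

theorem card_verts_inter_le (hl : G.Loopless) (hc : ∀ v, G.deg v = 3) {H₃ : Finset G.E}
    (h₁ : G.IsMatching H₁) (h₂ : G.IsMatching H₂) (d₁₂ : Disjoint H₁ H₂)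
    (hH₃ : G.IsMaximumMatchingIn (H₁ ∪ H₂)ᶜ H₃) :
    (G.verts H₁ ∩ G.verts H₂).card ≤ 2 * H₃.card + (G.verts H₁ ∪ G.verts H₂)ᶜ.card := by
  have hdeg v := degIn_compl_union_add hl h₁ h₂ d₁₂ v
  have hD : G.vertsOfDegIn (H₁ ∪ H₂)ᶜ 1 = G.verts H₁ ∩ G.verts H₂ := by
    ext v
    have := hdeg v
    rw [hc] at this
    simp only [mem_vertsOfDegIn, mem_inter, mem_verts]
    split_ifs at this <;> grind
  have hN : G.vertsOfDegIn (H₁ ∪ H₂)ᶜ 3 = (G.verts H₁ ∪ G.verts H₂)ᶜ := by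
    ext v
    have := hdeg v
    rw [hc] at this
    simp only [mem_vertsOfDegIn, mem_compl, mem_union, mem_verts]
    split_ifs at this <;> grind
  rw [← hD, ← hN]
  exact card_vertsOfDegIn_one_le hl hH₃ fun v => by have := hdeg v; rw [hc] at this; omega

end TwoMatchings

/-- Every cubic graph G satisfies ν₂(G) ≤ (|V(G)| + 2·ν₃(G))/4,
i.e. 4·ν₂(G) ≤ |V(G)| + 2·ν₃(G). -/
theorem cubic_nu2_le
    (G : Multigraph) (hloopless : G.Loopless) (hcubic : ∀ v : G.V, G.deg v = 3) :
    4 * G.nu2 ≤ Fintype.card G.V + 2 * G.nu3 := by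
  obtain ⟨H₁, H₂, h₁, h₂, d₁₂, hν₂⟩ := G.exists_nu2_eq
  obtain ⟨H₃, hH₃⟩ := G.exists_isMaximumMatchingIn (H₁ ∪ H₂)ᶜ
  obtain ⟨d₁₃, d₂₃⟩ := disjoint_union_left.mp (subset_compl_iff_disjoint_left.mp hH₃.subset)
  have hν₃ := card_add_card_add_card_le_nu3 h₁ h₂ hH₃.isMatching d₁₂ d₁₃ d₂₃
  have hkey := card_verts_inter_le hloopless hcubic h₁ h₂ d₁₂ hH₃
  have hinter := card_union_add_card_inter (G.verts H₁) (G.verts H₂)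
  have hcompl := card_add_card_compl (G.verts H₁ ∪ G.verts H₂)
  rw [h₁.card_verts, h₂.card_verts] at hinter
  omega

end Multigraph
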